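/- arXiv:0807.3863 — 3 statements merged into one kernel-verified Lean document; each statement's English description precedes it below -/
import Mathlib

section
/- Let A be an n×m real matrix, x ∈ R^n, q ∈ Z^m, and y ∈ Z^n. Then ‖y·x‖ ≤ m·|q|_∞·‖A^T y‖_Z + n·|y|_∞·‖Aq − x‖_Z, where ‖·‖_Z denotes distance to the nearest integer point in the infinity norm (and ‖t‖ distance of a scalar to the nearest integer). -/
/-- Distance of a real number to the nearest integer. -/
noncomputable def normZ1 (t : ℝ) : ℝ := ⨅ n : ℤ, |t - n|

/-- Distance (in the sup norm) of a vector in ℝ^k to the nearest integer vector. -/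
noncomputable def normZ {k : ℕ} (v : Fin k → ℝ) : ℝ :=
  ⨅ p : Fin k → ℤ, ‖v - fun i => (p i : ℝ)‖

lemma normZ1_le (t : ℝ) (z : ℤ) : normZ1 t ≤ |t - z| :=
  ciInf_le ⟨0, by rintro _ ⟨w, rfl⟩; positivity⟩ z

lemma round_best (v : ℝ) (z : ℤ) : |v - round v| ≤ |v - z| := by
  rcases eq_or_ne z (round v) with rfl | h
  · simp
  · have h1 : (1 : ℝ) ≤ |(round v : ℝ) - z| := by
      have hz : round v - z ≠ 0 := sub_ne_zero.mpr (Ne.symm h)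
      exact_mod_cast Int.one_le_abs hz
    have h2 : |(round v : ℝ) - z| ≤ |(round v : ℝ) - v| + |v - z| := abs_sub_le _ _ _
    have h3 : |(round v : ℝ) - v| ≤ 1 / 2 := by rw [abs_sub_comm]; exact abs_sub_round v
    have h4 : (1 : ℝ) / 2 ≤ |v - z| := by linarith
    linarith [abs_sub_round v]

lemma normZ_le_round {k : ℕ} (v : Fin k → ℝ) (p : Fin k → ℤ) :
    normZ v ≤ ‖v - fun i => ((p i : ℤ) : ℝ)‖ :=
  ciInf_le ⟨0, by rintro _ ⟨w, rfl⟩; positivity⟩ p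

lemma round_le_normZ {k : ℕ} (v : Fin k → ℝ) :
    ‖v - fun i => ((round (v i) : ℤ) : ℝ)‖ ≤ normZ v := by
  apply le_ciInf
  intro p
  rw [pi_norm_le_iff_of_nonneg (norm_nonneg _)]
  intro i
  calc ‖(v - fun i => ((round (v i) : ℤ) : ℝ)) i‖ = |v i - round (v i)| := rfl
    _ ≤ |v i - p i| := round_best _ _
    _ = ‖(v - fun i => ((p i : ℤ) : ℝ)) i‖ := rfl
    _ ≤ _ := norm_le_pi_norm _ i

theorem stmt3 (n m : ℕ) (A : Matrix (Fin n) (Fin m) ℝ) (x : Fin n → ℝ)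
    (q : Fin m → ℤ) (y : Fin n → ℤ) :
    normZ1 (∑ i, (y i : ℝ) * x i) ≤
      (m : ℝ) * ‖(fun j => (q j : ℝ) : Fin m → ℝ)‖ *
          normZ (A.transpose.mulVec fun i => (y i : ℝ))
        + (n : ℝ) * ‖(fun i => (y i : ℝ) : Fin n → ℝ)‖ *
          normZ (A.mulVec (fun j => (q j : ℝ)) - x) := by
  set w : Fin m → ℝ := A.transpose.mulVec fun i => (y i : ℝ) with hw
  set u : Fin n → ℝ := A.mulVec (fun j => (q j : ℝ)) - x with hu
  set z : ℤ := (∑ j, q j * round (w j)) - ∑ i, y i * round (u i) with hz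
  have key : (∑ i, (y i : ℝ) * x i) - (z : ℝ)
      = (∑ j, (q j : ℝ) * (w j - round (w j))) - ∑ i, (y i : ℝ) * (u i - round (u i)) := by
    have swap : ∑ j, (q j : ℝ) * w j = ∑ i, (y i : ℝ) * (A.mulVec (fun j => (q j : ℝ))) i := by
      simp only [hw, Matrix.mulVec, dotProduct, Matrix.transpose_apply,
        Finset.mul_sum, Finset.sum_mul]
      rw [Finset.sum_comm]
      congr 1; ext i; congr 1; ext j; ring
    have hui : ∀ i, u i = (A.mulVec (fun j => (q j : ℝ))) i - x i := fun i => rfl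
    rw [hz]
    push_cast
    simp only [mul_sub, Finset.sum_sub_distrib, hui, swap]
    ring
  have bq : ∀ j, |(q j : ℝ)| ≤ ‖(fun j => (q j : ℝ) : Fin m → ℝ)‖ := fun j =>
    norm_le_pi_norm (fun j => ((q j : ℝ))) j
  have by' : ∀ i, |(y i : ℝ)| ≤ ‖(fun i => (y i : ℝ) : Fin n → ℝ)‖ := fun i =>
    norm_le_pi_norm (fun i => ((y i : ℝ))) i
  have bw : ∀ j, |w j - round (w j)| ≤ normZ w := fun j =>
    le_trans (norm_le_pi_norm (w - fun j => ((round (w j) : ℤ) : ℝ)) j) (round_le_normZ w)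
  have bu : ∀ i, |u i - round (u i)| ≤ normZ u := fun i =>
    le_trans (norm_le_pi_norm (u - fun i => ((round (u i) : ℤ) : ℝ)) i) (round_le_normZ u)
  have hnZw : 0 ≤ normZ w := le_ciInf fun p => norm_nonneg _
  have hnZu : 0 ≤ normZ u := le_ciInf fun p => norm_nonneg _
  have hq0 : 0 ≤ ‖(fun j => (q j : ℝ) : Fin m → ℝ)‖ := norm_nonneg _
  have hy0 : 0 ≤ ‖(fun i => (y i : ℝ) : Fin n → ℝ)‖ := norm_nonneg _
  calc normZ1 (∑ i, (y i : ℝ) * x i) ≤ |(∑ i, (y i : ℝ) * x i) - (z : ℝ)| := normZ1_le _ z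
    _ = |(∑ j, (q j : ℝ) * (w j - round (w j))) - ∑ i, (y i : ℝ) * (u i - round (u i))| := by
        rw [key]
    _ ≤ |∑ j, (q j : ℝ) * (w j - round (w j))| + |∑ i, (y i : ℝ) * (u i - round (u i))| :=
        abs_sub _ _
    _ ≤ (∑ j, |(q j : ℝ) * (w j - round (w j))|) + ∑ i, |(y i : ℝ) * (u i - round (u i))| :=
        add_le_add (Finset.abs_sum_le_sum_abs _ _) (Finset.abs_sum_le_sum_abs _ _)
    _ ≤ (∑ _j : Fin m, ‖(fun j => (q j : ℝ) : Fin m → ℝ)‖ * normZ w)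
        + ∑ _i : Fin n, ‖(fun i => (y i : ℝ) : Fin n → ℝ)‖ * normZ u := by
        refine add_le_add (Finset.sum_le_sum fun j _ => ?_) (Finset.sum_le_sum fun i _ => ?_)
        · rw [abs_mul]; exact mul_le_mul (bq j) (bw j) (abs_nonneg _) hq0
        · rw [abs_mul]; exact mul_le_mul (by' i) (bu i) (abs_nonneg _) hy0
    _ = (m : ℝ) * ‖(fun j => (q j : ℝ) : Fin m → ℝ)‖ * normZ w
        + (n : ℝ) * ‖(fun i => (y i : ℝ) : Fin n → ℝ)‖ * normZ u := by
        simp [Finset.sum_const, mul_assoc]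
end

section
/- Let μ be a measure on R^n which is absolutely α-decaying and δ-Ahlfors regular. Then for any ball B of radius r < r_0 centered in the support of μ, any hyperplane L, and ε > 0, the number of disjoint balls of radius ρ ≤ ε/2 centered in supp(μ), contained in B and intersecting the ε/2-neighborhood of L, is at most C' (ε/r)^α (r/ρ)^δ for a constant C' depending only on the constants of μ. -/
open MeasureTheory Metric

/-- The support of a measure on Euclidean space: points all of whose neighbourhoods
have positive measure. -/
def measSupp {n : ℕ} (μ : Measure (EuclideanSpace ℝ (Fin n))) :
    Set (EuclideanSpace ℝ (Fin n)) :=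
  {x | ∀ r : ℝ, 0 < r → 0 < μ (Metric.ball x r)}

/-- The ε-neighbourhood of the affine hyperplane {w : u·w = t}. -/
def hypNbhd {n : ℕ} (u : EuclideanSpace ℝ (Fin n)) (t ε : ℝ) :
    Set (EuclideanSpace ℝ (Fin n)) :=
  {z | ∃ w : EuclideanSpace ℝ (Fin n), (∑ i, u i * w i) = t ∧ dist z w ≤ ε}

/-! A ball of radius `ρ` centred in `supp μ` has measure `≳ ρ^δ`, while the `(3/2)ε`-neighbourhood
of `L`, which contains all the balls of the family, has measure `≲ (ε/r)^α r^δ` inside `B(x₀, r)`.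
Since the balls are disjoint, comparing the two bounds counts them. -/

lemma radius_le_of_closedBall_subset {E : Type*} [NormedAddCommGroup E] [NormedSpace ℝ E]
    [Nontrivial E] {c x : E} {ρ r : ℝ} (hρ : 0 ≤ ρ) (hr : 0 ≤ r)
    (h : closedBall c ρ ⊆ closedBall x r) : ρ ≤ r := by
  have := (diam_mono h isBounded_closedBall).trans (diam_closedBall hr)
  rw [diam_closedBall_eq c hρ] at this
  linarith

lemma card_le_div_of_pairwiseDisjoint_closedBall {X : Type*} [PseudoMetricSpace X]
    [MeasurableSpace X] [OpensMeasurableSpace X] (μ : Measure X) {F : Finset X} {ρ m M : ℝ}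
    {S : Set X} (hm : 0 < m) (hM : 0 ≤ M) (hball : ∀ c ∈ F, ENNReal.ofReal m ≤ μ (closedBall c ρ))
    (hS : ∀ c ∈ F, closedBall c ρ ⊆ S) (hdisj : (F : Set X).PairwiseDisjoint (closedBall · ρ))
    (hμS : μ S ≤ ENNReal.ofReal M) : (F.card : ℝ) ≤ M / m := by
  have hpack : ENNReal.ofReal (F.card * m) ≤ ENNReal.ofReal M :=
    calc ENNReal.ofReal (F.card * m) = ∑ _c ∈ F, ENNReal.ofReal m := by
          rw [ENNReal.ofReal_mul (Nat.cast_nonneg _), ENNReal.ofReal_natCast, Finset.sum_const,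
            nsmul_eq_mul]
      _ ≤ ∑ c ∈ F, μ (closedBall c ρ) := Finset.sum_le_sum hball
      _ = μ (⋃ c ∈ F, closedBall c ρ) :=
          (measure_biUnion_finset hdisj fun _ _ ↦ measurableSet_closedBall).symm
      _ ≤ μ S := measure_mono (Set.iUnion₂_subset hS)
      _ ≤ ENNReal.ofReal M := hμS
  rw [le_div_iff₀ hm]
  exact (ENNReal.ofReal_le_ofReal_iff hM).mp hpack

lemma hypNbhd_mono {n : ℕ} (u : EuclideanSpace ℝ (Fin n)) (t : ℝ) {ε ε' : ℝ} (h : ε ≤ ε') :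
    hypNbhd u t ε ⊆ hypNbhd u t ε' := fun _ ⟨w, hw, hzw⟩ ↦ ⟨w, hw, hzw.trans h⟩

lemma closedBall_subset_hypNbhd {n : ℕ} {u c : EuclideanSpace ℝ (Fin n)} {t ε ρ : ℝ}
    (h : (closedBall c ρ ∩ hypNbhd u t ε).Nonempty) :
    closedBall c ρ ⊆ hypNbhd u t (ε + 2 * ρ) := by
  obtain ⟨y, hyc, w, hw, hyw⟩ := h
  refine fun z hzc ↦ ⟨w, hw, ?_⟩
  have := dist_triangle4 z c y w
  linarith [mem_closedBall.mp hzc, mem_closedBall'.mp hyc]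

lemma rpow_packing_bound_eq {C a b α δ ε r ρ : ℝ} (ha : 0 < a) (hε : 0 < ε) (hr : 0 < r)
    (hρ : 0 < ρ) :
    C * (3 / 2 * ε / r) ^ α * (b * r ^ δ) / (a * ρ ^ δ) =
      C * b / a * (3 / 2) ^ α * (ε / r) ^ α * (r / ρ) ^ δ := by
  rw [mul_div_assoc (3 / 2 : ℝ), Real.mul_rpow (by norm_num) (by positivity),
    Real.div_rpow hr.le hρ.le]
  have : 0 < ρ ^ δ := by positivity
  field_simp

theorem stmt8_general (n : ℕ) (μ : Measure (EuclideanSpace ℝ (Fin n)))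
    (C a b α δ r₀ : ℝ) (hC : 0 < C) (ha : 0 < a) (hb : 0 < b)
    (hreg : ∀ c ∈ measSupp μ, ∀ r : ℝ, 0 < r → r < r₀ →
      ENNReal.ofReal (a * r ^ δ) ≤ μ (closedBall c r) ∧
        μ (closedBall c r) ≤ ENNReal.ofReal (b * r ^ δ))
    (hdec : ∀ u : EuclideanSpace ℝ (Fin n), u ≠ 0 → ∀ t ε : ℝ, 0 < ε →
      ∀ x ∈ measSupp μ, ∀ r : ℝ, 0 < r → r < r₀ →
        μ (closedBall x r ∩ hypNbhd u t ε) ≤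
          ENNReal.ofReal (C * (ε / r) ^ α) * μ (closedBall x r)) :
    ∃ C' > (0 : ℝ), ∀ x₀ ∈ measSupp μ, ∀ r : ℝ, 0 < r → r < r₀ →
      ∀ u : EuclideanSpace ℝ (Fin n), u ≠ 0 → ∀ t ε ρ : ℝ, 0 < ε → 0 < ρ → ρ ≤ ε / 2 →
        ∀ F : Finset (EuclideanSpace ℝ (Fin n)),
          (∀ c ∈ F, c ∈ measSupp μ ∧ closedBall c ρ ⊆ closedBall x₀ r ∧
            (closedBall c ρ ∩ hypNbhd u t (ε / 2)).Nonempty) →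
          (∀ c ∈ F, ∀ c' ∈ F, c ≠ c' → Disjoint (closedBall c ρ) (closedBall c' ρ)) →
          (F.card : ℝ) ≤ C' * (ε / r) ^ α * (r / ρ) ^ δ := by
  refine ⟨C * b / a * (3 / 2) ^ α, by positivity, ?_⟩
  intro x₀ hx₀ r hr hrr₀ u hu t ε ρ hε hρ hρε F hF hdisj
  have : Nontrivial (EuclideanSpace ℝ (Fin n)) := nontrivial_of_ne u 0 hu
  have hball (c) (hc : c ∈ F) : ENNReal.ofReal (a * ρ ^ δ) ≤ μ (closedBall c ρ) :=
    have hρr := radius_le_of_closedBall_subset hρ.le hr.le (hF c hc).2.1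
    (hreg c (hF c hc).1 ρ hρ (hρr.trans_lt hrr₀)).1
  have hS (c) (hc : c ∈ F) : closedBall c ρ ⊆ closedBall x₀ r ∩ hypNbhd u t (3 / 2 * ε) :=
    Set.subset_inter (hF c hc).2.1 <| (closedBall_subset_hypNbhd (hF c hc).2.2).trans
      (hypNbhd_mono u t (by linarith))
  have hμS : μ (closedBall x₀ r ∩ hypNbhd u t (3 / 2 * ε)) ≤
      ENNReal.ofReal (C * (3 / 2 * ε / r) ^ α * (b * r ^ δ)) :=
    calc _ ≤ ENNReal.ofReal (C * (3 / 2 * ε / r) ^ α) * μ (closedBall x₀ r) :=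
          hdec u hu t _ (by positivity) x₀ hx₀ r hr hrr₀
      _ ≤ ENNReal.ofReal (C * (3 / 2 * ε / r) ^ α) * ENNReal.ofReal (b * r ^ δ) :=
          mul_le_mul_right (hreg x₀ hx₀ r hr hrr₀).2 _
      _ = _ := (ENNReal.ofReal_mul (by positivity)).symm
  have := card_le_div_of_pairwiseDisjoint_closedBall μ (by positivity) (by positivity) hball hS
    hdisj hμS
  rwa [rpow_packing_bound_eq ha hε hr hρ] at this

theorem stmt8 (n : ℕ) (μ : Measure (EuclideanSpace ℝ (Fin n)))
    (C a b α δ r₀ : ℝ) (hC : 0 < C) (ha : 0 < a) (hb : 0 < b) (hα : 0 < α)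
    (hδ : 0 < δ) (hr₀ : 0 < r₀)
    (hreg : ∀ c ∈ measSupp μ, ∀ r : ℝ, 0 < r → r < r₀ →
      ENNReal.ofReal (a * r ^ δ) ≤ μ (closedBall c r) ∧
        μ (closedBall c r) ≤ ENNReal.ofReal (b * r ^ δ))
    (hdec : ∀ u : EuclideanSpace ℝ (Fin n), u ≠ 0 → ∀ t ε : ℝ, 0 < ε →
      ∀ x ∈ measSupp μ, ∀ r : ℝ, 0 < r → r < r₀ →
        μ (closedBall x r ∩ hypNbhd u t ε) ≤
          ENNReal.ofReal (C * (ε / r) ^ α) * μ (closedBall x r)) :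
    ∃ C' > (0 : ℝ), ∀ x₀ ∈ measSupp μ, ∀ r : ℝ, 0 < r → r < r₀ →
      ∀ u : EuclideanSpace ℝ (Fin n), u ≠ 0 → ∀ t ε ρ : ℝ, 0 < ε → 0 < ρ → ρ ≤ ε / 2 →
        ∀ F : Finset (EuclideanSpace ℝ (Fin n)),
          (∀ c ∈ F, c ∈ measSupp μ ∧ closedBall c ρ ⊆ closedBall x₀ r ∧
            (closedBall c ρ ∩ hypNbhd u t (ε / 2)).Nonempty) →
          (∀ c ∈ F, ∀ c' ∈ F, c ≠ c' → Disjoint (closedBall c ρ) (closedBall c' ρ)) →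
          (F.card : ℝ) ≤ C' * (ε / r) ^ α * (r / ρ) ^ δ :=
  stmt8_general n μ C a b α δ r₀ hC ha hb hreg hdec
end

section
/- Let A ∈ Mat_{n×m}(R) and suppose the group G := A^T Z^n + Z^m ⊆ R^m has rank strictly less than n + m. Then the set {Aq mod 1 : q ∈ Z^m} ⊆ [0,1)^n is contained in a countable union of parallel (n−1)-dimensional affine hyperplanes of R^n, which are positively separated (there is d > 0 such that distinct hyperplanes in the family are at distance at least d). -/
/-!
A rank deficiency of `Aᵀℤⁿ + ℤᵐ` is a nontrivial ℚ-linear relation among the rows of `A` and the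
unit vectors of `ℝᵐ`; clearing denominators makes it an integer relation, i.e. a nonzero `u ∈ ℤⁿ`
with `uᵀA ∈ ℤᵐ`. Then `u · {Aq} = (uᵀA) · q - u · ⌊Aq⌋` is an integer for every `q ∈ ℤᵐ`, so
`{Aq mod 1}` lies on the hyperplanes `u · x = k`, `k ∈ ℤ`, which are `1 / ‖u‖` apart.
-/

/-- The set of generators of the group Aᵀℤⁿ + ℤᵐ inside ℝᵐ. -/
def groupGens (n m : ℕ) (A : Matrix (Fin n) (Fin m) ℝ) : Set (Fin m → ℝ) :=
  {v | ∃ y : Fin n → ℤ, v = A.transpose.mulVec fun i => (y i : ℝ)} ∪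
    {v | ∀ j, ∃ z : ℤ, v j = (z : ℝ)}

open Cardinal Submodule Set Matrix

universe u in
theorem LinearIndependent.cardinal_le_rank_span {R : Type*} {M ι : Type u} [Ring R] [Nontrivial R]
    [StrongRankCondition R] [AddCommGroup M] [Module R M] {v : ι → M} {s : Set M}
    (hv : LinearIndependent R v) (hs : range v ⊆ s) : #ι ≤ Module.rank R (span R s) :=
  calc #ι = #(range v) := (mk_range_eq v hv.injective).symm
    _ = Module.rank R (span R (range v)) := (rank_span hv).symm
    _ ≤ Module.rank R (span R s) := rank_mono (span_mono hs)

theorem range_rows_units_subset_groupGens {n m : ℕ} (A : Matrix (Fin n) (Fin m) ℝ) :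
    range (Sum.elim (fun i => A i) fun j => Pi.single j 1) ⊆ groupGens n m A := by
  rintro _ ⟨i | j, rfl⟩
  · refine Or.inl ⟨Pi.single i 1, ?_⟩
    funext j
    simp [Matrix.mulVec, dotProduct, Pi.single_apply]
  · refine Or.inr fun k => ⟨(Pi.single j 1 : Fin m → ℤ) k, ?_⟩
    simp [Pi.single_apply]

theorem exists_intCast_vecMul_eq_intCast {n m : ℕ} (A : Matrix (Fin n) (Fin m) ℝ)
    (hrank : Module.rank ℚ (span ℚ (groupGens n m A)) < (n + m : Cardinal)) :
    ∃ u : Fin n → ℤ, u ≠ 0 ∧ ∃ w : Fin m → ℤ,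
      (fun i => (u i : ℝ)) ᵥ* A = fun j => (w j : ℝ) := by
  set f : Fin n ⊕ Fin m → (Fin m → ℝ) := Sum.elim (fun i => A i) fun j => Pi.single j 1
  have hdep : ¬LinearIndependent ℤ f := by
    rw [LinearIndependent.iff_fractionRing ℤ ℚ]
    intro hf
    refine hrank.not_ge ?_
    simpa using hf.cardinal_le_rank_span (range_rows_units_subset_groupGens A)
  obtain ⟨g, hg, x, hx⟩ := Fintype.not_linearIndependent_iff.mp hdep
  have hrel : (fun i => (g (.inl i) : ℝ)) ᵥ* A = fun j => ((-g (.inr j) : ℤ) : ℝ) := by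
    funext j
    have := congrFun hg j
    simp only [f, Finset.sum_apply, Fintype.sum_sum_type, Sum.elim_inl, Sum.elim_inr, zsmul_eq_mul,
      Pi.mul_apply, Pi.intCast_apply, Pi.single_apply, mul_ite, mul_one, mul_zero,
      Finset.sum_ite_eq, Finset.mem_univ, ite_true, Pi.zero_apply] at this
    simp only [vecMul, dotProduct, Int.cast_neg]
    linarith
  refine ⟨fun i => g (.inl i), fun hu => hx ?_, _, hrel⟩
  rcases x with i | j
  · exact congrFun hu i
  · have hA0 : (fun i => (g (.inl i) : ℝ)) = 0 := funext fun i => by simp [congrFun hu i]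
    rw [hA0, zero_vecMul] at hrel
    simpa using (congrFun hrel j).symm

theorem exists_sum_mul_fract_mulVec_eq_intCast {ι κ : Type*} [Fintype ι] [Fintype κ]
    (A : Matrix ι κ ℝ) (u : ι → ℤ) (w : κ → ℤ)
    (huA : (fun i => (u i : ℝ)) ᵥ* A = fun j => (w j : ℝ)) (q : κ → ℤ) :
    ∃ k : ℤ, ∑ i, (u i : ℝ) * Int.fract ((A *ᵥ fun j => (q j : ℝ)) i) = k := by
  set x := A *ᵥ fun j => (q j : ℝ)
  refine ⟨∑ j, w j * q j - ∑ i, u i * ⌊x i⌋, ?_⟩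
  have hdot : ∑ i, (u i : ℝ) * x i = ∑ j, (w j : ℝ) * q j := by
    simpa only [dotProduct, huA] using dotProduct_mulVec (fun i => (u i : ℝ)) A _
  simp only [Int.fract, mul_sub, Finset.sum_sub_distrib, hdot]
  push_cast
  rfl

theorem stmt10 (n m : ℕ) (A : Matrix (Fin n) (Fin m) ℝ)
    (hrank : Module.rank ℚ ↥(Submodule.span ℚ (groupGens n m A)) < (n + m : Cardinal)) :
    ∃ u : Fin n → ℝ, u ≠ 0 ∧ ∃ T : Set ℝ, T.Countable ∧ ∃ d > (0 : ℝ),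
      (∀ t ∈ T, ∀ t' ∈ T, t ≠ t' →
        d ≤ |t - t'| / Real.sqrt (∑ i, (u i) ^ 2)) ∧
      ∀ q : Fin m → ℤ, ∃ t ∈ T,
        (∑ i, u i * Int.fract (A.mulVec (fun j => (q j : ℝ)) i)) = t := by
  obtain ⟨u, hu, w, huA⟩ := exists_intCast_vecMul_eq_intCast A hrank
  have hu' : (fun i => (u i : ℝ)) ≠ 0 := by
    simpa [funext_iff] using hu
  refine ⟨_, hu', range ((↑) : ℤ → ℝ), countable_range _, 1 / √(∑ i, (u i : ℝ) ^ 2), ?_, ?_,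
    fun q => ?_⟩
  · obtain ⟨i, hi⟩ := Function.ne_iff.mp hu'
    have : 0 < ∑ i, (u i : ℝ) ^ 2 :=
      Finset.sum_pos' (fun i _ => sq_nonneg _) ⟨i, Finset.mem_univ _, sq_pos_of_ne_zero hi⟩
    positivity
  · rintro _ ⟨k, rfl⟩ _ ⟨k', rfl⟩ hkk'
    gcongr
    exact_mod_cast Int.one_le_abs (sub_ne_zero.mpr fun h => hkk' (congrArg _ h))
  · obtain ⟨k, hk⟩ := exists_sum_mul_fract_mulVec_eq_intCast A u w huA q
    exact ⟨k, mem_range_self k, hk⟩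
end
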